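/- Let X be a real random variable with probability density f(x) = K₀(|x|)/π, and define m(α, ν) := E[tanh(αX + ν)·X]. Then m(α, ν) is nonincreasing in ν ≥ 0 for each fixed α ≥ 0, nondecreasing in α ≥ 0 for each fixed ν ≥ 0, and satisfies 0 ≤ m(α, ν) ≤ m(α, 0) ≤ α for all α, ν ≥ 0. -/

import Mathlib

open Real MeasureTheory

/-- Modified Bessel function of the second kind of order 0, via its integral
representation `K₀(x) = ∫₀^∞ exp(-x cosh t) dt`. -/
noncomputable def besselK0 (x : ℝ) : ℝ :=
  ∫ t in Set.Ioi (0 : ℝ), Real.exp (-x * Real.cosh t)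

/-- The probability density `x ↦ K₀(|x|)/π` on ℝ. -/
noncomputable def besselDensity (x : ℝ) : ℝ := besselK0 |x| / Real.pi

/-- The population EM expectation `m(α, ν) = E[tanh(αX + ν)·X]`. -/
noncomputable def mExp (α ν : ℝ) : ℝ :=
  ∫ x : ℝ, Real.tanh (α * x + ν) * x * besselDensity x

/-!
Pairing `x` with `-x` and using that the density `f` is even,
`m(α, ν) = ∫_{x>0} (tanh (ν + αx) - tanh (ν - αx)) x f(x) dx`. The bracket vanishes at
`α = 0` and is nondecreasing in `α` because `tanh` is; it equals
`sinh 2a / (cosh² ν + sinh² a)` with `a = αx`, hence is nonincreasing in `ν ≥ 0`.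
At `ν = 0` it is `2 tanh (αx) ≤ 2αx`, whence
`m(α, 0) ≤ 2α ∫_{x>0} x² f = α`. The second moment comes from Tonelli,
`∫₀^∞ x^k K₀(x) dx = k! ∫₀^∞ cosh⁻⁽ᵏ⁺¹⁾ t dt`, and `tanh · sech + gd`, with `gd = arctan ∘ sinh`
the Gudermannian, is an antiderivative of `2 sech³`.
-/

open Set Filter Topology
open scoped Nat

namespace Real

lemma tanh_sub_tanh (u v : ℝ) : tanh u - tanh v = sinh (u - v) / (cosh u * cosh v) := by
  have := (cosh_pos u).ne'
  have := (cosh_pos v).ne'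
  rw [tanh_eq_sinh_div_cosh, tanh_eq_sinh_div_cosh, sinh_sub]
  field_simp

lemma tanh_monotone : Monotone tanh := fun u v huv => sub_nonneg.1 <| by
  rw [tanh_sub_tanh]
  exact div_nonneg (sinh_nonneg_iff.2 (sub_nonneg.2 huv)) (mul_pos (cosh_pos v) (cosh_pos u)).le

lemma tanh_add_sub_tanh_sub (ν a : ℝ) :
    tanh (ν + a) - tanh (ν - a) = sinh (2 * a) / (cosh ν ^ 2 + sinh a ^ 2) := by
  have hprod : cosh (ν + a) * cosh (ν - a) = cosh ν ^ 2 + sinh a ^ 2 := by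
    rw [cosh_add, cosh_sub]
    linear_combination cosh ν ^ 2 * cosh_sq a + sinh a ^ 2 * cosh_sq ν
  rw [tanh_sub_tanh, hprod, show ν + a - (ν - a) = 2 * a by ring]

lemma sinh_le_mul_cosh {x : ℝ} (hx : 0 ≤ x) : sinh x ≤ x * cosh x := by
  have hmono : Monotone fun y => y * cosh y - sinh y := by
    refine monotone_of_hasDerivAt_nonneg (f' := fun y => y * sinh y) (fun y => ?_) fun y => ?_
    · exact (((hasDerivAt_id' y).mul (hasDerivAt_cosh y)).sub (hasDerivAt_sinh y)).congr_deriv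
        (by ring)
    · rcases le_total 0 y with hy | hy
      · exact mul_nonneg hy (sinh_nonneg_iff.2 hy)
      · exact mul_nonneg_of_nonpos_of_nonpos hy (sinh_nonpos_iff.2 hy)
  simpa using hmono hx

lemma tanh_le_self {x : ℝ} (hx : 0 ≤ x) : tanh x ≤ x := by
  rw [tanh_eq_sinh_div_cosh, div_le_iff₀ (cosh_pos x)]
  exact sinh_le_mul_cosh hx

@[fun_prop]
lemma continuous_tanh : Continuous tanh := by
  simp_rw [funext tanh_eq_sinh_div_cosh]
  exact continuous_sinh.div continuous_cosh fun x => (cosh_pos x).ne'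

noncomputable def gudermannian (t : ℝ) : ℝ := arctan (sinh t)

lemma hasDerivAt_gudermannian (t : ℝ) : HasDerivAt gudermannian (cosh t)⁻¹ t := by
  refine ((hasDerivAt_arctan (sinh t)).comp t (hasDerivAt_sinh t)).congr_deriv ?_
  have := (cosh_pos t).ne'
  rw [← cosh_sq']
  field_simp

lemma tendsto_sinh_atTop : Tendsto sinh atTop atTop :=
  tendsto_atTop_mono' _ ((eventually_ge_atTop 0).mono fun _ => self_le_sinh_iff.2) tendsto_id

lemma tendsto_cosh_atTop : Tendsto cosh atTop atTop :=
  tendsto_atTop_mono (fun x => (sinh_lt_cosh x).le) tendsto_sinh_atTop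

lemma tendsto_gudermannian_atTop : Tendsto gudermannian atTop (𝓝 (π / 2)) :=
  (tendsto_arctan_atTop.mono_right nhdsWithin_le_nhds).comp tendsto_sinh_atTop

lemma integrableOn_inv_cosh : IntegrableOn (fun t => (cosh t)⁻¹) (Ioi 0) :=
  integrableOn_Ioi_deriv_of_nonneg' (fun t _ => hasDerivAt_gudermannian t)
    (fun t _ => (inv_pos.2 (cosh_pos t)).le) tendsto_gudermannian_atTop

lemma integrableOn_factorial_div_cosh_pow (k : ℕ) :
    IntegrableOn (fun t => (k ! : ℝ) / cosh t ^ (k + 1)) (Ioi 0) := by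
  refine (integrableOn_inv_cosh.const_mul (k ! : ℝ)).mono'
    (by fun_prop : Measurable _).aestronglyMeasurable (ae_of_all _ fun t => ?_)
  have h1 := one_le_cosh t
  rw [Real.norm_of_nonneg (by positivity), div_eq_mul_inv]
  gcongr
  exact le_self_pow₀ h1 (Nat.succ_ne_zero k)

lemma hasDerivAt_sinh_div_cosh_sq_add_gudermannian (t : ℝ) :
    HasDerivAt (fun s => sinh s / cosh s ^ 2 + gudermannian s) (2 / cosh t ^ 3) t := by
  have := (cosh_pos t).ne'
  refine (((hasDerivAt_sinh t).div ((hasDerivAt_cosh t).fun_pow 2) (pow_ne_zero 2 this)).add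
    (hasDerivAt_gudermannian t)).congr_deriv ?_
  field_simp
  linear_combination 2 * cosh t * cosh_sq t

lemma tendsto_sinh_div_cosh_sq_atTop : Tendsto (fun s => sinh s / cosh s ^ 2) atTop (𝓝 0) := by
  refine squeeze_zero' ((eventually_ge_atTop 0).mono fun s hs => ?_)
    (Eventually.of_forall fun s => ?_)
    tendsto_cosh_atTop.inv_tendsto_atTop
  · have := sinh_nonneg_iff.2 hs
    positivity
  · have := cosh_pos s
    rw [div_le_iff₀ (by positivity), Pi.inv_apply]
    field_simp
    exact (sinh_lt_cosh s).le

lemma integral_two_div_cosh_pow_three : ∫ t in Ioi 0, 2 / cosh t ^ 3 = π / 2 := by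
  have := integral_Ioi_of_hasDerivAt_of_nonneg' (a := 0)
    (fun t _ => hasDerivAt_sinh_div_cosh_sq_add_gudermannian t)
    (fun t _ => by have := cosh_pos t; positivity)
    (by simpa using tendsto_sinh_div_cosh_sq_atTop.add tendsto_gudermannian_atTop)
  simpa [gudermannian] using this

end Real

lemma lintegral_pow_mul_exp_neg_mul (k : ℕ) {c : ℝ} (hc : 0 < c) :
    ∫⁻ x in Ioi 0, ENNReal.ofReal (x ^ k * exp (-(c * x)))
      = ENNReal.ofReal (k ! / c ^ (k + 1)) := by
  have key := integral_rpow_mul_exp_neg_mul_Ioi (a := k + 1) (by positivity) hc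
  simp only [add_sub_cancel_right, rpow_natCast, Gamma_nat_eq_factorial] at key
  have hint : IntegrableOn (fun x => x ^ k * exp (-(c * x))) (Ioi 0) :=
    .of_integral_ne_zero (by rw [key]; positivity)
  rw [← ofReal_integral_eq_lintegral_ofReal hint, key]
  · congr 1
    rw [← Nat.cast_add_one, rpow_natCast]
    ring
  · filter_upwards [ae_restrict_mem measurableSet_Ioi] with x hx
    have : (0 : ℝ) < x := hx
    positivity

lemma integrableOn_exp_neg_mul_cosh {x : ℝ} (hx : 0 < x) :
    IntegrableOn (fun t => exp (-x * cosh t)) (Ioi 0) := by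
  refine (exp_neg_integrableOn_Ioi 0 hx).mono' (by fun_prop : Continuous _).aestronglyMeasurable ?_
  filter_upwards [ae_restrict_mem measurableSet_Ioi] with t ht
  rw [Real.norm_of_nonneg (exp_pos _).le, exp_le_exp, neg_mul, neg_mul, neg_le_neg_iff]
  exact mul_le_mul_of_nonneg_left
    ((self_le_sinh_iff.2 (le_of_lt ht)).trans (sinh_lt_cosh t).le) hx.le

@[fun_prop]
lemma measurable_besselK0 : Measurable besselK0 :=
  (StronglyMeasurable.integral_prod_right' (ν := volume.restrict (Ioi 0))
    (by fun_prop : Continuous fun p : ℝ × ℝ => exp (-p.1 * cosh p.2)).stronglyMeasurable).measurable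

lemma ofReal_pow_mul_besselK0 (k : ℕ) {x : ℝ} (hx : 0 < x) :
    ENNReal.ofReal (x ^ k * besselK0 x)
      = ∫⁻ t in Ioi 0, ENNReal.ofReal (x ^ k * exp (-x * cosh t)) := by
  rw [besselK0, ← integral_const_mul, ofReal_integral_eq_lintegral_ofReal
    ((integrableOn_exp_neg_mul_cosh hx).const_mul _) (ae_of_all _ fun t => by positivity)]

lemma lintegral_pow_mul_besselK0 (k : ℕ) :
    ∫⁻ x in Ioi 0, ENNReal.ofReal (x ^ k * besselK0 x)
      = ∫⁻ t in Ioi 0, ENNReal.ofReal (k ! / cosh t ^ (k + 1)) := calc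
  _ = ∫⁻ x in Ioi 0, ∫⁻ t in Ioi 0, ENNReal.ofReal (x ^ k * exp (-x * cosh t)) :=
      setLIntegral_congr_fun measurableSet_Ioi fun x hx => ofReal_pow_mul_besselK0 k hx
  _ = ∫⁻ t in Ioi 0, ∫⁻ x in Ioi 0, ENNReal.ofReal (x ^ k * exp (-x * cosh t)) :=
      lintegral_lintegral_swap (by fun_prop)
  _ = _ := setLIntegral_congr_fun measurableSet_Ioi fun t _ => by
      simp_rw [neg_mul, mul_comm _ (cosh t)]
      exact lintegral_pow_mul_exp_neg_mul k (cosh_pos t)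

lemma besselK0_nonneg (x : ℝ) : 0 ≤ besselK0 x :=
  integral_nonneg fun _ => (exp_pos _).le

lemma pow_mul_besselK0_nonneg (k : ℕ) {x : ℝ} (hx : 0 ≤ x) : 0 ≤ x ^ k * besselK0 x :=
  mul_nonneg (pow_nonneg hx k) (besselK0_nonneg x)

lemma integrableOn_pow_mul_besselK0 (k : ℕ) :
    IntegrableOn (fun x => x ^ k * besselK0 x) (Ioi 0) := by
  refine ⟨(by fun_prop : Measurable _).aestronglyMeasurable, ?_⟩
  rw [hasFiniteIntegral_iff_ofReal, lintegral_pow_mul_besselK0]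
  · exact (integrableOn_factorial_div_cosh_pow k).lintegral_lt_top
  · filter_upwards [ae_restrict_mem measurableSet_Ioi] with x hx
    exact pow_mul_besselK0_nonneg k (le_of_lt hx)

lemma integral_pow_mul_besselK0 (k : ℕ) :
    ∫ x in Ioi 0, x ^ k * besselK0 x = ∫ t in Ioi 0, (k ! : ℝ) / cosh t ^ (k + 1) := by
  rw [integral_eq_lintegral_of_nonneg_ae _ (by fun_prop : Measurable _).aestronglyMeasurable,
    lintegral_pow_mul_besselK0, ← ofReal_integral_eq_lintegral_ofReal
      (integrableOn_factorial_div_cosh_pow k) (ae_of_all _ fun t => by positivity),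
    ENNReal.toReal_ofReal (integral_nonneg fun t => by positivity)]
  filter_upwards [ae_restrict_mem measurableSet_Ioi] with x hx
  exact pow_mul_besselK0_nonneg k (le_of_lt hx)

section Symmetrization

variable {E : Type*} [NormedAddCommGroup E]

lemma integrable_comp_abs {f : ℝ → E} (hf : IntegrableOn f (Ioi 0)) :
    Integrable (fun x => f |x|) := by
  have hIoi : IntegrableOn (fun x => f |x|) (Ioi 0) :=
    hf.congr_fun (fun x hx => by rw [abs_of_pos hx]) measurableSet_Ioi
  have hIic : IntegrableOn (fun x => f |x|) (Iic 0) := by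
    rw [← Measure.map_neg_eq_self (volume : Measure ℝ),
      (show MeasurableEmbedding fun x : ℝ => -x from
        (Homeomorph.neg ℝ).measurableEmbedding).integrableOn_map_iff]
    simpa [Function.comp_def, neg_preimage, neg_Iic] using
      (integrableOn_Ici_iff_integrableOn_Ioi (by finiteness)).2 hIoi
  simpa using hIic.union hIoi

lemma integral_eq_integral_Ioi_add_comp_neg [NormedSpace ℝ E] {g : ℝ → E} (hg : Integrable g) :
    ∫ x, g x = ∫ x in Ioi 0, (g x + g (-x)) := by
  rw [integral_add hg.integrableOn hg.comp_neg.integrableOn, integral_comp_neg_Ioi, neg_zero,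
    add_comm, ← integral_add_compl measurableSet_Iic hg, compl_Iic]

end Symmetrization

lemma besselDensity_nonneg (x : ℝ) : 0 ≤ besselDensity x :=
  div_nonneg (besselK0_nonneg _) pi_pos.le

lemma besselDensity_neg (x : ℝ) : besselDensity (-x) = besselDensity x := by
  rw [besselDensity, besselDensity, abs_neg]

@[fun_prop]
lemma measurable_besselDensity : Measurable besselDensity := by
  unfold besselDensity
  fun_prop

lemma integrable_abs_mul_besselDensity : Integrable (fun x => |x| * besselDensity x) := by
  simpa [besselDensity, mul_div_assoc] using
    integrable_comp_abs ((integrableOn_pow_mul_besselK0 1).div_const π)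

lemma sq_mul_besselDensity_of_pos {x : ℝ} (hx : 0 < x) :
    x ^ 2 * besselDensity x = x ^ 2 * besselK0 x / π := by
  rw [besselDensity, abs_of_pos hx, mul_div_assoc]

lemma integrableOn_sq_mul_besselDensity : IntegrableOn (fun x => x ^ 2 * besselDensity x) (Ioi 0) :=
  IntegrableOn.congr_fun ((integrableOn_pow_mul_besselK0 2).div_const π)
    (fun _ hx => (sq_mul_besselDensity_of_pos hx).symm) measurableSet_Ioi

lemma integral_sq_mul_besselDensity : ∫ x in Ioi 0, x ^ 2 * besselDensity x = 1 / 2 := by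
  rw [setIntegral_congr_fun measurableSet_Ioi fun _ hx => sq_mul_besselDensity_of_pos hx,
    integral_div, integral_pow_mul_besselK0]
  norm_num [Nat.factorial, integral_two_div_cosh_pow_three]
  field_simp

lemma integrable_tanh_mul_besselDensity (α ν : ℝ) :
    Integrable (fun x => tanh (α * x + ν) * x * besselDensity x) := by
  refine integrable_abs_mul_besselDensity.mono' (by fun_prop : Measurable _).aestronglyMeasurable
    (ae_of_all _ fun x => ?_)
  rw [norm_mul, norm_mul, Real.norm_of_nonneg (besselDensity_nonneg x), Real.norm_eq_abs,
    Real.norm_eq_abs, mul_assoc]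
  exact mul_le_of_le_one_left (by have := besselDensity_nonneg x; positivity) (abs_tanh_lt_one _).le

lemma tanh_mul_besselDensity_add_comp_neg (α ν x : ℝ) :
    tanh (α * x + ν) * x * besselDensity x + tanh (α * -x + ν) * -x * besselDensity (-x)
      = (tanh (ν + α * x) - tanh (ν - α * x)) * (x * besselDensity x) := by
  rw [besselDensity_neg, add_comm (α * x), show α * -x + ν = ν - α * x by ring]
  ring

lemma mExp_eq_integral_Ioi (α ν : ℝ) :
    mExp α ν = ∫ x in Ioi 0, (tanh (ν + α * x) - tanh (ν - α * x)) * (x * besselDensity x) := by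
  simp_rw [mExp, integral_eq_integral_Ioi_add_comp_neg (integrable_tanh_mul_besselDensity α ν),
    tanh_mul_besselDensity_add_comp_neg]

lemma integrableOn_tanh_sub_tanh_mul_besselDensity (α ν : ℝ) :
    IntegrableOn (fun x => (tanh (ν + α * x) - tanh (ν - α * x)) * (x * besselDensity x))
      (Ioi 0) := by
  have hg := integrable_tanh_mul_besselDensity α ν
  exact (hg.integrableOn.add hg.comp_neg.integrableOn).congr_fun
    (fun x _ => tanh_mul_besselDensity_add_comp_neg α ν x) measurableSet_Ioi

lemma mExp_le_mExp_of_forall_le {α ν α' ν' : ℝ} (h : ∀ x, 0 < x →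
      tanh (ν + α * x) - tanh (ν - α * x) ≤ tanh (ν' + α' * x) - tanh (ν' - α' * x)) :
    mExp α ν ≤ mExp α' ν' := by
  rw [mExp_eq_integral_Ioi, mExp_eq_integral_Ioi]
  exact setIntegral_mono_on (integrableOn_tanh_sub_tanh_mul_besselDensity α ν)
    (integrableOn_tanh_sub_tanh_mul_besselDensity α' ν') measurableSet_Ioi fun x hx =>
      mul_le_mul_of_nonneg_right (h x hx) (mul_nonneg (le_of_lt hx) (besselDensity_nonneg x))

lemma mExp_zero_left (ν : ℝ) : mExp 0 ν = 0 := by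
  simp [mExp_eq_integral_Ioi]

lemma mExp_mono_left {ν α α' : ℝ} (h : α ≤ α') : mExp α ν ≤ mExp α' ν :=
  mExp_le_mExp_of_forall_le fun x hx => sub_le_sub
    (tanh_monotone (by gcongr)) (tanh_monotone (by gcongr))

lemma mExp_anti_right {α ν ν' : ℝ} (hα : 0 ≤ α) (hν : 0 ≤ ν) (h : ν ≤ ν') :
    mExp α ν' ≤ mExp α ν :=
  mExp_le_mExp_of_forall_le fun x hx => by
    rw [tanh_add_sub_tanh_sub, tanh_add_sub_tanh_sub]
    have hcosh : cosh ν ≤ cosh ν' := by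
      rwa [cosh_le_cosh, abs_of_nonneg hν, abs_of_nonneg (hν.trans h)]
    have := cosh_pos ν
    gcongr

lemma mExp_zero_right_le {α : ℝ} (hα : 0 ≤ α) : mExp α 0 ≤ α := calc
  mExp α 0 ≤ ∫ x in Ioi 0, 2 * α * (x ^ 2 * besselDensity x) := by
    rw [mExp_eq_integral_Ioi]
    refine setIntegral_mono_on (integrableOn_tanh_sub_tanh_mul_besselDensity α 0)
      (integrableOn_sq_mul_besselDensity.const_mul _) measurableSet_Ioi fun x hx => ?_
    have hxf : 0 ≤ x * besselDensity x := mul_nonneg (le_of_lt hx) (besselDensity_nonneg x)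
    have := mul_le_mul_of_nonneg_right (tanh_le_self (mul_nonneg hα (le_of_lt hx))) hxf
    simp only [zero_add, zero_sub, tanh_neg, sub_neg_eq_add]
    linarith
  _ = α := by rw [integral_const_mul, integral_sq_mul_besselDensity]; ring

theorem mExp_monotone :
    (∀ α : ℝ, 0 ≤ α → ∀ ν ν' : ℝ, 0 ≤ ν → ν ≤ ν' → mExp α ν' ≤ mExp α ν) ∧
      (∀ ν : ℝ, 0 ≤ ν → ∀ α α' : ℝ, 0 ≤ α → α ≤ α' → mExp α ν ≤ mExp α' ν) ∧
      (∀ α ν : ℝ, 0 ≤ α → 0 ≤ ν →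
        0 ≤ mExp α ν ∧ mExp α ν ≤ mExp α 0 ∧ mExp α 0 ≤ α) := by
  refine ⟨fun α hα ν ν' hν h => mExp_anti_right hα hν h,
    fun ν _ α α' _ h => mExp_mono_left h,
    fun α ν hα hν => ⟨?_, mExp_anti_right hα le_rfl hν, mExp_zero_right_le hα⟩⟩
  simpa only [mExp_zero_left] using mExp_mono_left (ν := ν) hα
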